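/- Let A be a commutative ring, n a positive integer, and U a multiplicatively closed subset of A[X] containing 1. Let W be the multiplicatively closed subset of A[X_1, …, X_n] generated by {f(X_i) : f ∈ U, 1 ≤ i ≤ n}; W is stable under the action of the symmetric group S_n permuting the variables, so the S_n-action extends to the localization of A[X_1, …, X_n] at W (which is identified with ⊗_A^n A[X]_U). Then the canonical map from the localization of the symmetric subalgebra of A[X_1, …, X_n] at U(n) = {∏_{i=1}^n f(X_i) : f ∈ U} to the localization of A[X_1, …, X_n] at W is injective, and its image is exactly the subalgebra of S_n-invariant elements; that is, (⊗_A^{(n)} A[X])_{U(n)} ≅ ⊗_A^{(n)} (A[X]_U). -/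

import Mathlib

open MvPolynomial

set_option synthInstance.maxHeartbeats 1000000
set_option maxHeartbeats 1000000

section Scaffold

variable {A : Type*} [CommRing A] {n : ℕ}

/-- Substituting `X_j ↦ f(X_j)` into a symmetric polynomial yields a symmetric polynomial. -/
theorem subst_isSymmetric (f : Polynomial A)
    {p : MvPolynomial (Fin n) A} (hp : p.IsSymmetric) :
    (MvPolynomial.aeval
      (fun j => Polynomial.aeval (MvPolynomial.X j : MvPolynomial (Fin n) A) f) p).IsSymmetric := by
  intro e
  have h1 : (rename e) ((MvPolynomial.aeval
        (fun j => Polynomial.aeval (MvPolynomial.X j : MvPolynomial (Fin n) A) f)) p)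
      = MvPolynomial.aeval
        (fun j => Polynomial.aeval (MvPolynomial.X (e j) : MvPolynomial (Fin n) A) f) p := by
    rw [← AlgHom.comp_apply, comp_aeval]
    congr 1
    congr 1
    funext j
    rw [← Polynomial.aeval_algHom_apply (rename (R := A) e) (MvPolynomial.X j) f, rename_X]
  rw [h1]
  have h2 : (fun j => Polynomial.aeval (MvPolynomial.X (e j) : MvPolynomial (Fin n) A) f)
      = (fun j => Polynomial.aeval (MvPolynomial.X j : MvPolynomial (Fin n) A) f) ∘ e := rfl
  rw [h2, ← aeval_rename, hp e]

/-- `∏_{i=1}^n f(X_i)` as an element of the symmetric subalgebra of `A[X_1, …, X_n]`. -/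
noncomputable def prodSubst (f : Polynomial A) : symmetricSubalgebra (Fin n) A :=
  ⟨∏ i : Fin n, Polynomial.aeval (MvPolynomial.X i : MvPolynomial (Fin n) A) f,
   (mem_symmetricSubalgebra _).2 (by
      have h : (∏ i : Fin n, Polynomial.aeval (MvPolynomial.X i : MvPolynomial (Fin n) A) f)
          = MvPolynomial.aeval (R := A)
              (fun j => Polynomial.aeval (MvPolynomial.X j : MvPolynomial (Fin n) A) f)
              (∏ i : Fin n, MvPolynomial.X i) := by
        rw [map_prod]
        simp
      rw [h]
      exact subst_isSymmetric f (by
        intro e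
        rw [map_prod]
        simp only [rename_X]
        exact Equiv.prod_comp e _))⟩

/-- The multiplicative set `U(n) = {∏_{i=1}^n f(X_i) : f ∈ U}` inside the symmetric
subalgebra of `A[X_1, …, X_n]`. -/
noncomputable def Un (U : Submonoid (Polynomial A)) (n : ℕ) :
    Submonoid (symmetricSubalgebra (Fin n) A) where
  carrier := {x | ∃ f ∈ U, x = prodSubst f}
  one_mem' := ⟨1, U.one_mem, Subtype.ext (by simp [prodSubst])⟩
  mul_mem' := by
    rintro x y ⟨f, hf, rfl⟩ ⟨g, hg, rfl⟩
    exact ⟨f * g, U.mul_mem hf hg,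
      Subtype.ext (by simp [prodSubst, map_mul, Finset.prod_mul_distrib])⟩

end Scaffold


variable {A : Type*} [CommRing A] {n : ℕ}

/-- The multiplicative set of `A[X_1, …, X_n]` generated by `{f(X_i) : f ∈ U, i}`. -/
noncomputable def Wgen (U : Submonoid (Polynomial A)) (n : ℕ) :
    Submonoid (MvPolynomial (Fin n) A) :=
  Submonoid.closure
    {x | ∃ f ∈ U, ∃ i : Fin n, x = Polynomial.aeval (MvPolynomial.X i : MvPolynomial (Fin n) A) f}

/-- `W` is stable under the `S_n`-action permuting the variables. -/
theorem Wgen_stable (U : Submonoid (Polynomial A)) (σ : Equiv.Perm (Fin n)) :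
    Wgen U n ≤ (Wgen U n).comap ((rename (σ : Fin n → Fin n)).toRingHom :
      MvPolynomial (Fin n) A →+* MvPolynomial (Fin n) A) := by
  rw [Wgen, Submonoid.closure_le]
  rintro x ⟨f, hf, i, rfl⟩
  refine Submonoid.mem_comap.2 (Submonoid.subset_closure ⟨f, hf, σ i, ?_⟩)
  show (rename (σ : Fin n → Fin n))
      (Polynomial.aeval (MvPolynomial.X i : MvPolynomial (Fin n) A) f) = _
  rw [← Polynomial.aeval_algHom_apply (rename (R := A) (σ : Fin n → Fin n))
    (MvPolynomial.X i) f, rename_X]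

/-- The extension to `(⊗_A^n A[X])_U` of the `S_n`-action permuting the variables. -/
noncomputable def actionMap (U : Submonoid (Polynomial A)) (n : ℕ) (σ : Equiv.Perm (Fin n)) :
    Localization (Wgen U n) →+* Localization (Wgen U n) :=
  IsLocalization.map (M := Wgen U n) (T := Wgen U n) (Localization (Wgen U n))
    ((rename (σ : Fin n → Fin n)).toRingHom :
      MvPolynomial (Fin n) A →+* MvPolynomial (Fin n) A)
    (Wgen_stable U σ)

theorem Un_le_comap (U : Submonoid (Polynomial A)) (n : ℕ) :
    Un U n ≤ (Wgen U n).comap ((symmetricSubalgebra (Fin n) A).subtype) := by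
  rintro x ⟨f, hf, rfl⟩
  refine Submonoid.mem_comap.2 ?_
  show (∏ i : Fin n, Polynomial.aeval (MvPolynomial.X i : MvPolynomial (Fin n) A) f) ∈ Wgen U n
  refine Submonoid.prod_mem _ fun i _ => Submonoid.subset_closure ?_
  exact ⟨f, hf, i, rfl⟩

/-- The canonical map `(⊗_A^{(n)} A[X])_{U(n)} → ⊗_A^n (A[X]_U)`, i.e. the map induced on
localizations by the inclusion of the symmetric subalgebra into `A[X_1, …, X_n]`. -/
noncomputable def canonicalLocMap (U : Submonoid (Polynomial A)) (n : ℕ) :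
    Localization (Un U n) →+* Localization (Wgen U n) :=
  IsLocalization.map (M := Un U n) (T := Wgen U n) (Localization (Wgen U n))
    ((symmetricSubalgebra (Fin n) A).subtype)
    (Un_le_comap U n)

/-! Every element of `W` divides some `∏ᵢ f(Xᵢ)` with `f ∈ U`, so the localization at `W` is
already the localization at the image of `U(n)`; localizing the injective inclusion of the
symmetric subalgebra therefore stays injective. If a fraction `r / s` with `s ∈ U(n)` is
`S_n`-invariant, then for each `σ` some `u_σ ∈ U(n)` kills `σ r - r`; with `t = ∏_σ u_σ` the
numerator `t r` is symmetric and `r / s = t r / t s`. -/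

namespace IsLocalization

variable {B R : Type*} [CommRing B] [CommRing R] {ι : B →+* R} {V : Submonoid B}
  {W : Submonoid R}

theorem isLocalization_map_of_exists_dvd (hVW : V ≤ W.comap ι)
    (hdvd : ∀ w ∈ W, ∃ v ∈ V, w ∣ ι v) :
    IsLocalization (V.map ι) (Localization W) :=
  (iff_of_le_of_exists_dvd (V.map ι) W (Submonoid.map_le_iff_le_comap.2 hVW) fun w hw ↦
    let ⟨v, hv, hwv⟩ := hdvd w hw
    ⟨ι v, Submonoid.mem_map_of_mem ι hv, hwv⟩).2 inferInstance

theorem map_injective_of_exists_dvd (hι : Function.Injective ι) (hVW : V ≤ W.comap ι)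
    (hdvd : ∀ w ∈ W, ∃ v ∈ V, w ∣ ι v) :
    Function.Injective (map (Localization W) ι hVW : Localization V → Localization W) :=
  have := isLocalization_map_of_exists_dvd hVW hdvd
  map_injective_of_injective V (Localization V) (Localization W) hι

theorem exists_mk'_eq_of_exists_dvd (hVW : V ≤ W.comap ι) (hdvd : ∀ w ∈ W, ∃ v ∈ V, w ∣ ι v)
    (x : Localization W) : ∃ (r : R) (v : V), x = mk' (Localization W) r ⟨ι v, hVW v.2⟩ := by
  obtain ⟨⟨r, w⟩, rfl⟩ := mk'_surjective W x
  obtain ⟨v, hv, a, ha⟩ := hdvd w w.2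
  refine ⟨r * a, ⟨v, hv⟩, (mk'_eq_iff_eq).2 (congrArg _ ?_)⟩
  change ι v * r = w * (r * a)
  rw [ha]
  ring

variable {G : Type*} {φ : G → R →+* R} (hφW : ∀ g, W ≤ W.comap (φ g))

theorem map_comp_map_of_forall_map_eq (hVW : V ≤ W.comap ι) (hfix : ∀ g b, φ g (ι b) = ι b)
    (g : G) :
    (map (Localization W) (φ g) (hφW g)).comp (map (Localization W) ι hVW) =
      (map (Localization W) ι hVW : Localization V →+* Localization W) :=
  ringHom_ext V <| RingHom.ext fun b ↦ by simp [map_eq, hfix]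

theorem exists_mul_map_eq_of_map_mk'_eq (hVW : V ≤ W.comap ι)
    (hdvd : ∀ w ∈ W, ∃ v ∈ V, w ∣ ι v) (hfix : ∀ g b, φ g (ι b) = ι b) {g : G} {r : R} {v : V}
    (h : map (Localization W) (φ g) (hφW g) (mk' (Localization W) r ⟨ι v, hVW v.2⟩) =
      mk' (Localization W) r ⟨ι v, hVW v.2⟩) :
    ∃ u ∈ V, ι u * φ g r = ι u * r := by
  rw [map_mk', mk'_eq_iff_eq, eq_iff_exists W] at h
  obtain ⟨c, hc⟩ := h
  obtain ⟨u, hu, a, ha⟩ := hdvd c c.2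
  refine ⟨u * v, mul_mem hu v.2, ?_⟩
  simp only [hfix] at hc
  rw [map_mul, ha]
  linear_combination a * hc

theorem range_map_eq_setOf_forall_map_eq [Fintype G] (hVW : V ≤ W.comap ι)
    (hdvd : ∀ w ∈ W, ∃ v ∈ V, w ∣ ι v) (hrange : Set.range ι = {r | ∀ g, φ g r = r}) :
    Set.range (map (Localization W) ι hVW : Localization V → Localization W) =
      {x | ∀ g, map (Localization W) (φ g) (hφW g) x = x} := by
  have hfix (g : G) (b : B) : φ g (ι b) = ι b := hrange.le (Set.mem_range_self b) g
  ext x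
  constructor
  · rintro ⟨y, rfl⟩ g
    exact RingHom.congr_fun (map_comp_map_of_forall_map_eq hφW hVW hfix g) y
  · intro hx
    obtain ⟨r, v, rfl⟩ := exists_mk'_eq_of_exists_dvd hVW hdvd x
    choose u hu hur using fun g ↦ exists_mul_map_eq_of_map_mk'_eq hφW hVW hdvd hfix (hx g)
    set t := ∏ g, u g
    have ht : t ∈ V := prod_mem fun g _ ↦ hu g
    have htr : ι t * r ∈ Set.range ι := hrange.ge fun g ↦ by
      obtain ⟨c, hc⟩ := map_dvd ι (Finset.dvd_prod_of_mem u (Finset.mem_univ g))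
      rw [map_mul, hfix, hc]
      linear_combination c * hur g
    obtain ⟨b, hb⟩ := htr
    refine ⟨mk' (Localization V) b ⟨t * v, mul_mem ht v.2⟩, ?_⟩
    rw [map_mk', mk'_eq_iff_eq]
    congr 1
    simp only [hb, map_mul]
    ring

end IsLocalization

theorem MvPolynomial.range_symmetricSubalgebra_subtype {σ R : Type*} [CommSemiring R] :
    Set.range
        ((symmetricSubalgebra σ R).subtype : symmetricSubalgebra σ R →+* MvPolynomial σ R) =
      {p | ∀ e : Equiv.Perm σ, (rename e).toRingHom p = p} := by
  ext p
  exact ⟨fun ⟨q, hq⟩ ↦ hq ▸ q.2, fun hp ↦ ⟨⟨p, hp⟩, rfl⟩⟩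

theorem exists_dvd_of_mem_Wgen (U : Submonoid (Polynomial A)) {w : MvPolynomial (Fin n) A}
    (hw : w ∈ Wgen U n) : ∃ v ∈ Un U n, w ∣ (v : MvPolynomial (Fin n) A) := by
  induction hw using Submonoid.closure_induction with
  | mem _ hw =>
    obtain ⟨f, hf, i, rfl⟩ := hw
    exact ⟨prodSubst f, ⟨f, hf, rfl⟩, Finset.dvd_prod_of_mem _ (Finset.mem_univ i)⟩
  | one => exact ⟨1, one_mem _, one_dvd _⟩
  | mul _ _ _ _ hx hy =>
    obtain ⟨v₁, hv₁, hxv₁⟩ := hx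
    obtain ⟨v₂, hv₂, hyv₂⟩ := hy
    exact ⟨v₁ * v₂, mul_mem hv₁ hv₂, mul_dvd_mul hxv₁ hyv₂⟩

/-- The canonical map `(⊗_A^{(n)} A[X])_{U(n)} → ⊗_A^n (A[X]_U)` is injective, and its image
is exactly the subring of `S_n`-invariant elements; that is,
`(⊗_A^{(n)} A[X])_{U(n)} ≅ ⊗_A^{(n)} (A[X]_U)`. -/
theorem canonicalLocMap_injective_range_invariants (U : Submonoid (Polynomial A)) (n : ℕ) :
    Function.Injective (canonicalLocMap U n)
    ∧ Set.range (canonicalLocMap U n)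
        = {x : Localization (Wgen U n) | ∀ σ : Equiv.Perm (Fin n), actionMap U n σ x = x} :=
  have hdvd := fun _ ↦ exists_dvd_of_mem_Wgen (n := n) U
  ⟨IsLocalization.map_injective_of_exists_dvd Subtype.val_injective (Un_le_comap U n) hdvd,
    IsLocalization.range_map_eq_setOf_forall_map_eq (Wgen_stable U) (Un_le_comap U n) hdvd
      range_symmetricSubalgebra_subtype⟩
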